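/- arXiv:1603.02626 — 3 statements merged into one kernel-verified Lean document; each statement's English description precedes it below -/
import Mathlib

section
/- Hilbert's theorem for univariate polynomials: a polynomial p with real coefficients in one variable satisfies p(x) ≥ 0 for every real x if and only if there exist polynomials q and r with real coefficients such that p = q² + r², i.e., p is a sum of two squares of polynomials. -/
/-!
Induction on the degree. A nonconstant nonnegative `p` has a complex root `z`. If `z` is real it
is a minimum of `p`, hence a root of `p'` as well, and `(X - z)²` divides `p`; otherwise the
conjugate pair gives the factor `(X - re z)² + (im z)²`. Either way `p = ((X - a)² + b²) g` with
`g` nonnegative off `a`, hence everywhere by continuity, and of smaller degree; the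
Brahmagupta–Fibonacci identity makes sums of two squares closed under products.
-/

open Polynomial Topology

def IsSumOfTwoSquares {R : Type*} [CommRing R] (a : R) : Prop :=
  ∃ x y : R, a = x ^ 2 + y ^ 2

theorem IsSumOfTwoSquares.mul {R : Type*} [CommRing R] {a b : R}
    (ha : IsSumOfTwoSquares a) (hb : IsSumOfTwoSquares b) : IsSumOfTwoSquares (a * b) := by
  obtain ⟨x₁, x₂, rfl⟩ := ha
  obtain ⟨y₁, y₂, rfl⟩ := hb
  exact ⟨_, _, sq_add_sq_mul_sq_add_sq⟩

theorem Continuous.nonneg_of_forall_ne {X : Type*} [TopologicalSpace X] {f : X → ℝ}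
    (hf : Continuous f) {a : X} [(𝓝[≠] a).NeBot] (h : ∀ x ≠ a, 0 ≤ f x) (x : X) :
    0 ≤ f x :=
  (isClosed_le continuous_const hf).closure_subset_iff.mpr h <|
    (dense_compl_singleton a).closure_eq.symm ▸ Set.mem_univ x

namespace Polynomial

theorem sq_X_sub_C_dvd_of_isRoot_of_nonneg {p : ℝ[X]} {a : ℝ} (hroot : p.IsRoot a)
    (hp : ∀ x, 0 ≤ p.eval x) : (X - C a) ^ 2 ∣ p := by
  rcases eq_or_ne p 0 with rfl | hp0
  · exact dvd_zero _
  have hmin : IsLocalMin (fun x => p.eval x) a :=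
    Filter.Eventually.of_forall fun x => by simpa [hroot.eq_zero] using hp x
  have hderiv : (derivative p).IsRoot a := by
    rw [IsRoot, ← Polynomial.deriv]
    exact hmin.deriv_eq_zero
  exact (le_rootMultiplicity_iff hp0).mp
    ((one_lt_rootMultiplicity_iff_isRoot hp0).mpr ⟨hroot, hderiv⟩)

theorem exists_sq_add_sq_dvd_of_nonneg {p : ℝ[X]} (hdeg : 0 < p.degree)
    (hp : ∀ x, 0 ≤ p.eval x) : ∃ a b : ℝ, (X - C a) ^ 2 + C b ^ 2 ∣ p := by
  obtain ⟨z, hz⟩ := IsAlgClosed.exists_aeval_eq_zero ℂ p hdeg.ne'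
  rcases eq_or_ne z.im 0 with him | him
  · refine ⟨z.re, 0, ?_⟩
    have hroot : p.IsRoot z.re := by
      have hz_re : (z.re : ℂ) = z := Complex.ext rfl (by simp [him])
      have h := aeval_algebraMap_apply_eq_algebraMap_eval (A := ℂ) z.re p
      rw [Complex.coe_algebraMap, hz_re, hz] at h
      exact_mod_cast h.symm
    simpa using sq_X_sub_C_dvd_of_isRoot_of_nonneg hroot hp
  · refine ⟨z.re, z.im, ?_⟩
    convert p.quadratic_dvd_of_aeval_eq_zero_im_ne_zero hz him using 1
    rw [Complex.sq_norm, Complex.normSq_apply]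
    simp only [map_add, map_mul, map_ofNat]
    ring

theorem isSumOfTwoSquares_of_nonneg {p : ℝ[X]} (hp : ∀ x, 0 ≤ p.eval x) :
    IsSumOfTwoSquares p := by
  induction hn : p.natDegree using Nat.strong_induction_on generalizing p with
  | _ n ih =>
  rcases Nat.eq_zero_or_pos n with rfl | hn_pos
  · have hc : 0 ≤ p.coeff 0 := by simpa [coeff_zero_eq_eval_zero] using hp 0
    refine ⟨C √(p.coeff 0), 0, ?_⟩
    rw [← C_pow, Real.sq_sqrt hc, zero_pow two_ne_zero, add_zero]
    exact eq_C_of_natDegree_eq_zero hn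
  obtain ⟨a, b, g, rfl⟩ :=
    exists_sq_add_sq_dvd_of_nonneg (natDegree_pos_iff_degree_pos.mp (hn ▸ hn_pos)) hp
  have hd_pos : ∀ x ≠ a, 0 < ((X - C a) ^ 2 + C b ^ 2).eval x := fun x hx => by
    have : x - a ≠ 0 := sub_ne_zero.mpr hx
    simp only [eval_add, eval_pow, eval_sub, eval_X, eval_C]
    positivity
  have hd_deg : ((X - C a) ^ 2 + C b ^ 2).natDegree = 2 := by
    rw [← C_pow, natDegree_add_C, natDegree_pow, natDegree_X_sub_C]
  have hd_ne : (X - C a) ^ 2 + C b ^ 2 ≠ 0 := fun h => by simp [h] at hd_deg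
  have hg_ne : g ≠ 0 := by rintro rfl; rw [mul_zero, natDegree_zero] at hn; omega
  have hg : ∀ x, 0 ≤ g.eval x := g.continuous.nonneg_of_forall_ne fun x hx =>
    nonneg_of_mul_nonneg_right (by simpa only [eval_mul] using hp x) (hd_pos x hx)
  have hg_deg : g.natDegree < n := by
    rw [← hn, natDegree_mul hd_ne hg_ne, hd_deg]
    omega
  exact IsSumOfTwoSquares.mul ⟨_, _, rfl⟩ (ih _ hg_deg hg rfl)

end Polynomial

theorem nonneg_polynomial_iff_sum_of_two_squares (p : Polynomial ℝ) :
    (∀ x : ℝ, p.eval x ≥ 0) ↔ ∃ q r : Polynomial ℝ, p = q ^ 2 + r ^ 2 := by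
  refine ⟨isSumOfTwoSquares_of_nonneg, ?_⟩
  rintro ⟨q, r, rfl⟩ x
  simp only [eval_add, eval_pow]
  positivity
end

section
/- A univariate real polynomial p of degree at most 2d satisfies p(x) ≥ 0 for every real x if and only if there exists a positive semidefinite real symmetric matrix Q of size (d+1) × (d+1) such that p(x) = x̄ᵀ Q x̄ for every real x, where x̄ = (1, x, x², ..., x^d)ᵀ. Equivalently, the coefficient of p in each degree i satisfies pᵢ = Σ_{g+h=i} Q_{g,h}. -/
/-!
A nonnegative real polynomial is a sum of squares of polynomials of at most half its degree:
at a global minimum `a` the polynomial `p - p(a)` has a double root, so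
`p = (X - a)² h + p(a)` with `h` again nonnegative and of smaller degree. A square `q²` with
`deg q ≤ d` is the Gram form of the rank-one matrix `c cᵀ` of coefficients of `q`, so a sum of
squares is the Gram form of a sum of such PSD matrices. Conversely a Gram form of a PSD matrix
is `x̄ᵀ Q x̄ ≥ 0`.
-/

open Polynomial Matrix

namespace Polynomial

variable {R : Type*} [CommRing R]

lemma sq_X_sub_C_dvd_of_isRoot_of_isRoot_derivative {p : R[X]} {a : R} (h₀ : p.IsRoot a)
    (h₁ : p.derivative.IsRoot a) : (X - C a) ^ 2 ∣ p := by
  rcases eq_or_ne p 0 with rfl | hp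
  · exact dvd_zero _
  · exact (le_rootMultiplicity_iff hp).1 ((one_lt_rootMultiplicity_iff_isRoot hp).2 ⟨h₀, h₁⟩)

lemma eval_eq_sum_fin {p : R[X]} {n : ℕ} (hp : p.natDegree < n) (x : R) :
    p.eval x = ∑ i : Fin n, p.coeff i * x ^ (i : ℕ) := by
  rw [eval_eq_sum_range' hp, Fin.sum_univ_eq_sum_range (fun i => p.coeff i * x ^ i)]

lemma isRoot_derivative_of_forall_eval_le {p : ℝ[X]} {a : ℝ} (ha : ∀ y, p.eval a ≤ p.eval y) :
    p.derivative.IsRoot a := by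
  have hmin : IsLocalMin (fun x => p.eval x) a := Filter.Eventually.of_forall ha
  rw [IsRoot, ← p.deriv, hmin.deriv_eq_zero]

lemma nonneg_of_nonneg_sq_X_sub_C_mul {h : ℝ[X]} {a : ℝ}
    (hh : ∀ x, 0 ≤ ((X - C a) ^ 2 * h).eval x) (x : ℝ) : 0 ≤ h.eval x := by
  have hne : {a}ᶜ ⊆ {y | 0 ≤ h.eval y} := fun y (hy : y ≠ a) => by
    have hy' := hh y
    rw [eval_mul, eval_pow, eval_sub, eval_X, eval_C] at hy'
    exact nonneg_of_mul_nonneg_right hy' (pow_two_pos_of_ne_zero (sub_ne_zero.2 hy))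
  -- `h` is nonnegative off `a`, hence on the closure of `{a}ᶜ`, which is all of `ℝ`
  have := closure_minimal hne (isClosed_le continuous_const h.continuous)
  rw [(dense_compl_singleton a).closure_eq] at this
  exact this (Set.mem_univ x)

lemma exists_eq_sq_X_sub_C_mul_add_C_of_nonneg {p : ℝ[X]} (hp : ∀ x, 0 ≤ p.eval x) :
    ∃ a c : ℝ, ∃ h : ℝ[X], 0 ≤ c ∧ (∀ x, 0 ≤ h.eval x) ∧ p = (X - C a) ^ 2 * h + C c := by
  obtain ⟨a, ha⟩ := p.exists_forall_norm_le
  have hmin : ∀ y, p.eval a ≤ p.eval y := fun y => by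
    simpa only [Real.norm_of_nonneg (hp _)] using ha y
  obtain ⟨h, hh⟩ : (X - C a) ^ 2 ∣ p - C (p.eval a) :=
    sq_X_sub_C_dvd_of_isRoot_of_isRoot_derivative (by simp)
      (by simpa using isRoot_derivative_of_forall_eval_le hmin)
  refine ⟨a, p.eval a, h, hp a, nonneg_of_nonneg_sq_X_sub_C_mul (a := a) fun x => ?_, ?_⟩
  · simpa [← hh] using hmin x
  · rw [← hh, sub_add_cancel]

theorem exists_sum_sq_of_nonneg {p : ℝ[X]} (hp : ∀ x, 0 ≤ p.eval x) :
    ∃ (k : ℕ) (q : Fin k → ℝ[X]), (∀ i, 2 * (q i).natDegree ≤ p.natDegree) ∧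
      p = ∑ i, q i ^ 2 := by
  induction hn : p.natDegree using Nat.strong_induction_on generalizing p with
  | _ n ih =>
  obtain ⟨a, c, h, hc, hh, rfl⟩ := exists_eq_sq_X_sub_C_mul_add_C_of_nonneg hp
  rcases eq_or_ne h 0 with rfl | h0
  · refine ⟨1, ![C √c], by simp, ?_⟩
    simp [← C_pow, Real.sq_sqrt hc]
  have hdeg : ((X - C a) ^ 2 * h + C c).natDegree = h.natDegree + 2 := by
    rw [natDegree_add_C, natDegree_mul (pow_ne_zero _ (X_sub_C_ne_zero a)) h0,
      natDegree_pow, natDegree_X_sub_C, add_comm]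
  obtain ⟨k, q, hq, rfl⟩ := ih h.natDegree (by omega) hh rfl
  refine ⟨k + 1, Fin.cons (C √c) fun i => (X - C a) * q i, fun i => ?_, ?_⟩
  · refine Fin.cases (by simp) (fun i => ?_) i
    have hmul : ((X - C a) * q i).natDegree ≤ 1 + (q i).natDegree :=
      natDegree_X_sub_C a ▸ natDegree_mul_le
    simp only [Fin.cons_succ]
    linarith [hq i]
  · simp [Fin.sum_univ_succ, mul_pow, ← Finset.mul_sum, ← C_pow, Real.sq_sqrt hc, add_comm]

end Polynomial

section GramForm

variable {R : Type*} [CommRing R] {n : ℕ}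

def gramForm (Q : Matrix (Fin n) (Fin n) R) (x : R) : R :=
  ∑ g : Fin n, ∑ h : Fin n, Q g h * x ^ ((g : ℕ) + (h : ℕ))

lemma gramForm_eq_dotProduct (Q : Matrix (Fin n) (Fin n) R) (x : R) :
    gramForm Q x = (fun i : Fin n => x ^ (i : ℕ)) ⬝ᵥ Q *ᵥ fun i => x ^ (i : ℕ) := by
  simp only [gramForm, dotProduct, mulVec, Finset.mul_sum, pow_add]
  exact Finset.sum_congr rfl fun g _ => Finset.sum_congr rfl fun h _ => by ring

lemma gramForm_sum {ι : Type*} (s : Finset ι) (Q : ι → Matrix (Fin n) (Fin n) R) (x : R) :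
    gramForm (∑ i ∈ s, Q i) x = ∑ i ∈ s, gramForm (Q i) x := by
  simp only [gramForm_eq_dotProduct, sum_mulVec, dotProduct_sum]

lemma gramForm_vecMulVec (u v : Fin n → R) (x : R) :
    gramForm (vecMulVec u v) x = (∑ i, u i * x ^ (i : ℕ)) * ∑ i, v i * x ^ (i : ℕ) := by
  rw [gramForm_eq_dotProduct, vecMulVec_mulVec, op_smul_eq_smul, dotProduct_smul, smul_eq_mul,
    dotProduct_comm _ u, mul_comm]
  rfl

lemma gramForm_nonneg {Q : Matrix (Fin n) (Fin n) ℝ} (hQ : Q.PosSemidef) (x : ℝ) :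
    0 ≤ gramForm Q x := by
  simpa [gramForm_eq_dotProduct] using hQ.dotProduct_mulVec_nonneg fun i => x ^ (i : ℕ)

end GramForm

lemma exists_posSemidef_gramForm_eq_eval_sum_sq {d k : ℕ} (q : Fin k → ℝ[X])
    (hq : ∀ i, (q i).natDegree ≤ d) :
    ∃ Q : Matrix (Fin (d + 1)) (Fin (d + 1)) ℝ, Q.PosSemidef ∧
      ∀ x, (∑ i, q i ^ 2).eval x = gramForm Q x := by
  set coeffs : Fin k → Fin (d + 1) → ℝ := fun i j => (q i).coeff j
  refine ⟨∑ i, vecMulVec (coeffs i) (coeffs i),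
    posSemidef_sum _ fun i _ => by simpa using posSemidef_vecMulVec_self_star (coeffs i),
    fun x => ?_⟩
  rw [eval_finsetSum, gramForm_sum]
  refine Finset.sum_congr rfl fun i _ => ?_
  rw [gramForm_vecMulVec, eval_pow, eval_eq_sum_fin (Nat.lt_succ_of_le (hq i)), sq]

theorem nonneg_polynomial_iff_psd_gram (d : ℕ) (p : Polynomial ℝ)
    (hdeg : p.natDegree ≤ 2 * d) :
    (∀ x : ℝ, p.eval x ≥ 0) ↔
      ∃ Q : Matrix (Fin (d + 1)) (Fin (d + 1)) ℝ, Q.PosSemidef ∧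
        ∀ x : ℝ, p.eval x = ∑ g : Fin (d + 1), ∑ h : Fin (d + 1),
          Q g h * x ^ ((g : ℕ) + (h : ℕ)) := by
  constructor
  · intro hp
    obtain ⟨k, q, hq, rfl⟩ := exists_sum_sq_of_nonneg hp
    exact exists_posSemidef_gramForm_eq_eval_sum_sq q fun i => by linarith [hq i]
  · rintro ⟨Q, hQ, hpQ⟩ x
    exact hpQ x ▸ gramForm_nonneg hQ x
end

section
/- Theorem (nonnegativity on an interval): let v₁ < v₂ be real numbers. A univariate real polynomial p satisfies p(x) ≥ 0 for all x in the closed interval [v₁, v₂] if and only if there exist univariate real polynomials q and r, each a sum of squares of polynomials, such that p = (X - v₁)·q + (v₂ - X)·r. -/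
/-!
The weighted sums `(X - v₁) q + (v₂ - X) r` with `q`, `r` sums of squares form a cone that contains
every sum of squares (because `(X - v₁) + (v₂ - X)` is a positive constant) and the product
`(X - v₁)(v₂ - X)`; hence it is closed under multiplication. A polynomial that is nonnegative on
`[v₁, v₂]` factors into pieces of this cone: a real root `a ≤ v₁` or `a ≥ v₂` gives the factor
`X - a` or `a - X`, a root inside the interval is a local minimum and hence a double root, giving the
square `(X - a)²`, and a non-real root gives a positive definite quadratic `(X - re z)² + (im z)²`.
The cofactor is again nonnegative on the interval, since the factor is positive off finitely many
points, so induction on the degree applies.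
-/

open Polynomial

def IsSumOfSquares (p : Polynomial ℝ) : Prop :=
  ∃ (m : ℕ) (f : Fin m → Polynomial ℝ), p = ∑ s, (f s) ^ 2

open Set

theorem IsSumSq.map {R S F : Type*} [NonUnitalNonAssocSemiring R] [NonUnitalNonAssocSemiring S]
    [FunLike F R S] [NonUnitalRingHomClass F R S] (f : F) {s : R} (hs : IsSumSq s) :
    IsSumSq (f s) := by
  induction hs with
  | zero => simp
  | sq_add a _ ih => simpa using ih.sq_add (f a)

theorem isSumOfSquares_iff_isSumSq {p : ℝ[X]} : IsSumOfSquares p ↔ IsSumSq p := by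
  constructor
  · rintro ⟨m, f, rfl⟩
    exact IsSumSq.sum_sq _ f
  · intro hp
    induction hp with
    | zero => exact ⟨0, Fin.elim0, by simp⟩
    | sq_add a _ ih =>
      obtain ⟨m, f, rfl⟩ := ih
      exact ⟨m + 1, Fin.cons a f, by simp [Fin.sum_univ_succ, sq]⟩

theorem isSumSq_C_of_nonneg {c : ℝ} (hc : 0 ≤ c) : IsSumSq (C c) := by
  rw [← Real.mul_self_sqrt hc, C_mul]
  exact IsSumSq.mul_self _

theorem isSumSq_sq {R : Type*} [CommSemiring R] (a : R) : IsSumSq (a ^ 2) :=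
  (IsSquare.sq a).isSumSq

def IsWeightedSOS (v₁ v₂ : ℝ) (p : ℝ[X]) : Prop :=
  ∃ q r : ℝ[X], IsSumSq q ∧ IsSumSq r ∧ p = (X - C v₁) * q + (C v₂ - X) * r

namespace IsWeightedSOS

variable {v₁ v₂ : ℝ} {p p' : ℝ[X]}

theorem eval_nonneg (hp : IsWeightedSOS v₁ v₂ p) {x : ℝ} (hx : x ∈ Icc v₁ v₂) :
    0 ≤ p.eval x := by
  obtain ⟨q, r, hq, hr, rfl⟩ := hp
  have hq' : 0 ≤ q.eval x := (hq.map (evalRingHom x)).nonneg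
  have hr' : 0 ≤ r.eval x := (hr.map (evalRingHom x)).nonneg
  simp only [eval_add, eval_mul, eval_sub, eval_X, eval_C]
  exact add_nonneg (mul_nonneg (sub_nonneg.2 hx.1) hq') (mul_nonneg (sub_nonneg.2 hx.2) hr')

theorem add (hp : IsWeightedSOS v₁ v₂ p) (hp' : IsWeightedSOS v₁ v₂ p') :
    IsWeightedSOS v₁ v₂ (p + p') := by
  obtain ⟨q, r, hq, hr, rfl⟩ := hp
  obtain ⟨q', r', hq', hr', rfl⟩ := hp'
  exact ⟨q + q', r + r', hq.add hq', hr.add hr', by ring⟩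

theorem isSumSq_mul {s : ℝ[X]} (hs : IsSumSq s) (hp : IsWeightedSOS v₁ v₂ p) :
    IsWeightedSOS v₁ v₂ (s * p) := by
  obtain ⟨q, r, hq, hr, rfl⟩ := hp
  exact ⟨s * q, s * r, hs.mul hq, hs.mul hr, by ring⟩

theorem of_isSumSq (hv : v₁ < v₂) {s : ℝ[X]} (hs : IsSumSq s) : IsWeightedSOS v₁ v₂ s := by
  have hc : IsSumSq (C (v₂ - v₁)⁻¹ * s) :=
    (isSumSq_C_of_nonneg (inv_nonneg.2 (sub_nonneg.2 hv.le))).mul hs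
  refine ⟨_, _, hc, hc, ?_⟩
  rw [← add_mul, ← mul_assoc, sub_add_sub_cancel', ← C_sub, ← C_mul,
    mul_inv_cancel₀ (sub_ne_zero.2 hv.ne'), C_1, one_mul]

theorem X_sub_C_mul_C_sub_X (hv : v₁ < v₂) : IsWeightedSOS v₁ v₂ ((X - C v₁) * (C v₂ - X)) := by
  have hc : 0 ≤ (v₂ - v₁)⁻¹ := inv_nonneg.2 (sub_nonneg.2 hv.le)
  refine ⟨C (v₂ - v₁)⁻¹ * (C v₂ - X) ^ 2, C (v₂ - v₁)⁻¹ * (X - C v₁) ^ 2,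
    (isSumSq_C_of_nonneg hc).mul (isSumSq_sq _), (isSumSq_C_of_nonneg hc).mul (isSumSq_sq _), ?_⟩
  -- `(v₂ - v₁)(X - v₁)(v₂ - X) = (X - v₁)(v₂ - X)² + (v₂ - X)(X - v₁)²`
  have h : (C v₂ - C v₁) * C (v₂ - v₁)⁻¹ = (1 : ℝ[X]) := by
    rw [← C_sub, ← C_mul, mul_inv_cancel₀ (sub_ne_zero.2 hv.ne'), C_1]
  linear_combination -(X - C v₁) * (C v₂ - X) * h

theorem mul (hv : v₁ < v₂) (hp : IsWeightedSOS v₁ v₂ p) (hp' : IsWeightedSOS v₁ v₂ p') :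
    IsWeightedSOS v₁ v₂ (p * p') := by
  obtain ⟨q, r, hq, hr, rfl⟩ := hp
  obtain ⟨q', r', hq', hr', rfl⟩ := hp'
  have h : ((X - C v₁) * q + (C v₂ - X) * r) * ((X - C v₁) * q' + (C v₂ - X) * r') =
      (X - C v₁) ^ 2 * (q * q') + (C v₂ - X) ^ 2 * (r * r') +
        (q * r' + q' * r) * ((X - C v₁) * (C v₂ - X)) := by ring
  rw [h]
  exact ((of_isSumSq hv ((isSumSq_sq _).mul (hq.mul hq'))).add
    (of_isSumSq hv ((isSumSq_sq _).mul (hr.mul hr')))).add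
    (isSumSq_mul ((hq.mul hr').add (hq'.mul hr)) (X_sub_C_mul_C_sub_X hv))

theorem X_sub_C (hv : v₁ < v₂) {a : ℝ} (ha : a ≤ v₁) : IsWeightedSOS v₁ v₂ (X - C a) := by
  have h : IsWeightedSOS v₁ v₂ (X - C v₁) := ⟨1, 0, .one, .zero, by ring⟩
  convert h.add (of_isSumSq hv (isSumSq_C_of_nonneg (sub_nonneg.2 ha))) using 1
  rw [C_sub]; ring

theorem C_sub_X (hv : v₁ < v₂) {a : ℝ} (ha : v₂ ≤ a) : IsWeightedSOS v₁ v₂ (C a - X) := by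
  have h : IsWeightedSOS v₁ v₂ (C v₂ - X) := ⟨0, 1, .zero, .one, by ring⟩
  convert h.add (of_isSumSq hv (isSumSq_C_of_nonneg (sub_nonneg.2 ha))) using 1
  rw [C_sub]; ring

end IsWeightedSOS

theorem Polynomial.eval_nonneg_of_eval_mul_nonneg {v₁ v₂ : ℝ} (hv : v₁ < v₂) {f g : ℝ[X]}
    (hf : f ≠ 0) (hf₀ : ∀ x ∈ Icc v₁ v₂, 0 ≤ f.eval x)
    (hfg : ∀ x ∈ Icc v₁ v₂, 0 ≤ (f * g).eval x) : ∀ x ∈ Icc v₁ v₂, 0 ≤ g.eval x := by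
  have hdense : Dense {x | f.IsRoot x}ᶜ :=
    (finite_setOfPred_isRoot hf).countable.dense_compl ℝ
  have hsub : Ioo v₁ v₂ ∩ {x | f.IsRoot x}ᶜ ⊆ {x | 0 ≤ g.eval x} := by
    rintro x ⟨hx, hfx⟩
    have hx' := Ioo_subset_Icc_self hx
    have h := hfg x hx'
    rw [eval_mul] at h
    exact nonneg_of_mul_nonneg_right h ((hf₀ x hx').lt_of_ne' hfx)
  calc Icc v₁ v₂ = closure (Ioo v₁ v₂) := (closure_Ioo hv.ne).symm
    _ ⊆ closure (Ioo v₁ v₂ ∩ {x | f.IsRoot x}ᶜ) :=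
      closure_minimal (hdense.open_subset_closure_inter isOpen_Ioo) isClosed_closure
    _ ⊆ {x | 0 ≤ g.eval x} := closure_minimal hsub (isClosed_le continuous_const g.continuous)

theorem Polynomial.sq_X_sub_C_dvd_of_isLocalMin {p : ℝ[X]} {a : ℝ} (hroot : p.IsRoot a)
    (hmin : IsLocalMin p.eval a) : (X - C a) ^ 2 ∣ p := by
  rcases eq_or_ne p 0 with rfl | hp
  · exact dvd_zero _
  have hderiv : p.derivative.IsRoot a := hmin.hasDerivAt_eq_zero (p.hasDerivAt a)
  exact (le_rootMultiplicity_iff hp).mp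
    ((one_lt_rootMultiplicity_iff_isRoot hp).mpr ⟨hroot, hderiv⟩)

theorem Polynomial.exists_isSumSq_dvd_of_forall_not_isRoot {p : ℝ[X]} (hp : 0 < p.natDegree)
    (hroot : ∀ x, ¬ p.IsRoot x) : ∃ q : ℝ[X], IsSumSq q ∧ q.natDegree = 2 ∧ q ∣ p := by
  obtain ⟨z, hz⟩ := IsAlgClosed.exists_aeval_eq_zero ℂ p (natDegree_pos_iff_degree_pos.mp hp).ne'
  have him : z.im ≠ 0 := by
    intro h0
    refine hroot z.re ?_
    have hre : (z.re : ℂ) = z := Complex.ext rfl (by simp [h0])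
    rw [← hre, ← Complex.coe_algebraMap, aeval_algebraMap_apply_eq_algebraMap_eval] at hz
    simpa using hz
  refine ⟨(X - C z.re) ^ 2 + C z.im ^ 2, (isSumSq_sq _).add (isSumSq_sq _), ?_, ?_⟩
  · rw [← C_pow, natDegree_add_C, natDegree_pow, natDegree_X_sub_C]
  · convert p.quadratic_dvd_of_aeval_eq_zero_im_ne_zero hz him using 1
    rw [Complex.sq_norm, Complex.normSq_apply]
    simp only [C_add, C_mul, C_ofNat]
    ring

section

variable {v₁ v₂ : ℝ}

theorem exists_isWeightedSOS_dvd (hv : v₁ < v₂) {p : ℝ[X]} (hp : 0 < p.natDegree)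
    (hnn : ∀ x ∈ Icc v₁ v₂, 0 ≤ p.eval x) :
    ∃ f, IsWeightedSOS v₁ v₂ f ∧ 0 < f.natDegree ∧ f ∣ p := by
  by_cases hroot : ∃ a, p.IsRoot a
  · obtain ⟨a, ha⟩ := hroot
    have hdvd : X - C a ∣ p := dvd_iff_isRoot.2 ha
    rcases le_or_gt a v₁ with h₁ | h₁
    · exact ⟨X - C a, .X_sub_C hv h₁, by simp, hdvd⟩
    rcases le_or_gt v₂ a with h₂ | h₂
    · have hneg : C a - X = -(X - C a) := (neg_sub _ _).symm
      exact ⟨C a - X, .C_sub_X hv h₂, by rw [hneg, natDegree_neg]; simp, hneg ▸ neg_dvd.2 hdvd⟩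
    · have hmin : IsLocalMin p.eval a :=
        Filter.mem_of_superset (Icc_mem_nhds h₁ h₂) fun x hx => by
          simpa [ha.eq_zero] using hnn x hx
      exact ⟨(X - C a) ^ 2, .of_isSumSq hv (isSumSq_sq _), by simp,
        sq_X_sub_C_dvd_of_isLocalMin ha hmin⟩
  · push Not at hroot
    obtain ⟨q, hq, hdeg, hdvd⟩ := exists_isSumSq_dvd_of_forall_not_isRoot hp hroot
    exact ⟨q, .of_isSumSq hv hq, by omega, hdvd⟩

theorem isWeightedSOS_of_forall_eval_nonneg (hv : v₁ < v₂) {p : ℝ[X]}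
    (hp : ∀ x ∈ Icc v₁ v₂, 0 ≤ p.eval x) : IsWeightedSOS v₁ v₂ p := by
  induction hn : p.natDegree using Nat.strong_induction_on generalizing p with
  | _ n ih =>
  rcases Nat.eq_zero_or_pos n with rfl | hpos
  · rw [eq_C_of_natDegree_eq_zero hn] at hp ⊢
    exact .of_isSumSq hv (isSumSq_C_of_nonneg (by simpa using hp v₁ ⟨le_rfl, hv.le⟩))
  obtain ⟨f, hf, hfdeg, g, rfl⟩ := exists_isWeightedSOS_dvd hv (hn ▸ hpos) hp
  have hf0 : f ≠ 0 := ne_zero_of_natDegree_gt hfdeg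
  have hg0 : g ≠ 0 := by rintro rfl; simp at hn; omega
  have hg := eval_nonneg_of_eval_mul_nonneg hv hf0 (fun x hx => hf.eval_nonneg hx) hp
  rw [natDegree_mul hf0 hg0] at hn
  exact hf.mul hv (ih _ (by omega) hg rfl)

end

theorem nonneg_on_interval_iff_weighted_sos (v₁ v₂ : ℝ) (hv : v₁ < v₂)
    (p : Polynomial ℝ) :
    (∀ x ∈ Set.Icc v₁ v₂, p.eval x ≥ 0) ↔
      ∃ q r : Polynomial ℝ, IsSumOfSquares q ∧ IsSumOfSquares r ∧
        p = (X - C v₁) * q + (C v₂ - X) * r := by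
  simp only [isSumOfSquares_iff_isSumSq, ge_iff_le]
  exact ⟨isWeightedSOS_of_forall_eval_nonneg hv, fun hp x hx => IsWeightedSOS.eval_nonneg hp hx⟩
end
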